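/- arXiv:1010.1018 — 2 statements merged into one kernel-verified Lean document; each statement's English description precedes it below -/
import Mathlib

section
/- Let A be an invertible d₁×d₁ complex matrix and B an invertible d₂×d₂ complex matrix, and let X₀,…,X_m and Y₀,…,Y_m be d₁×d₂ complex matrices such that A Xᵢ = Yᵢ B and Xᵢ B† = A† Yᵢ for all 0 ≤ i ≤ m. Define U = A · ((A†A)^{1/2})⁻¹ and V = B · ((B†B)^{1/2})⁻¹, where (·)^{1/2} denotes the unique positive-semidefinite square root of a positive-semidefinite Hermitian matrix. Then U and V are unitary matrices and U Xᵢ V† = Yᵢ for all 0 ≤ i ≤ m. -/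
open Matrix
open scoped ComplexOrder

/-!
With `P = (AᴴA)^{1/2}` and `Q = (BᴴB)^{1/2}`, `U = A P⁻¹` is unitary because `P` is Hermitian with
`P² = AᴴA`. The two relations give `P² Xᵢ = Aᴴ Yᵢ B = Xᵢ Q²`, and since the Sylvester equation
`P Z + Z Q = 0` has no nonzero solution for `P > 0`, `Q ≥ 0`, the square roots intertwine too:
`P Xᵢ = Xᵢ Q`. Hence `U Xᵢ = A Xᵢ Q⁻¹ = Yᵢ B Q⁻¹ = Yᵢ V`, and `U Xᵢ Vᴴ = Yᵢ V Vᴴ = Yᵢ`.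
-/

/-- The positive semidefinite square root of a positive semidefinite matrix
(Mathlib's December 2024 definition, since removed). -/
noncomputable def Matrix.PosSemidef.sqrt {n : Type*} [Fintype n] [DecidableEq n] {𝕜 : Type*}
    [RCLike 𝕜] {A : Matrix n n 𝕜} (hA : A.PosSemidef) : Matrix n n 𝕜 :=
  hA.1.eigenvectorUnitary.1 * diagonal ((↑) ∘ (√·) ∘ hA.1.eigenvalues) *
  (star hA.1.eigenvectorUnitary : Matrix n n 𝕜)

namespace Matrix

variable {m n 𝕜 : Type*} [Fintype m] [Fintype n] [DecidableEq n] [RCLike 𝕜]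

namespace PosSemidef

section

variable {A : Matrix n n 𝕜} (hA : A.PosSemidef)

lemma sqrt_eq_conjStarAlgAut :
    hA.sqrt = Unitary.conjStarAlgAut 𝕜 _ hA.1.eigenvectorUnitary
      (diagonal ((↑) ∘ (√·) ∘ hA.1.eigenvalues)) :=
  (Unitary.conjStarAlgAut_apply _ _).symm

theorem sqrt_mul_self : hA.sqrt * hA.sqrt = A := by
  have hsq : ∀ i, ((√(hA.1.eigenvalues i) : ℝ) : 𝕜) * (√(hA.1.eigenvalues i) : ℝ) =
      hA.1.eigenvalues i := fun i => by
    rw [← RCLike.ofReal_mul, Real.mul_self_sqrt (hA.eigenvalues_nonneg i)]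
  conv_rhs => rw [hA.1.spectral_theorem]
  rw [sqrt_eq_conjStarAlgAut, ← map_mul, diagonal_mul_diagonal]
  simp only [Function.comp_apply, hsq]
  rfl

theorem posSemidef_sqrt : hA.sqrt.PosSemidef := by
  have hD : (diagonal ((↑) ∘ (√·) ∘ hA.1.eigenvalues) : Matrix n n 𝕜).PosSemidef :=
    PosSemidef.diagonal fun i => RCLike.ofReal_nonneg.mpr (Real.sqrt_nonneg _)
  have := hD.mul_mul_conjTranspose_same (hA.1.eigenvectorUnitary : Matrix n n 𝕜)
  rwa [← star_eq_conjTranspose] at this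

theorem isUnit_sqrt (hu : IsUnit A) : IsUnit hA.sqrt :=
  ((Commute.refl hA.sqrt).isUnit_mul_iff.mp (by rwa [hA.sqrt_mul_self])).1

theorem posDef_sqrt (hu : IsUnit A) : hA.sqrt.PosDef :=
  hA.posSemidef_sqrt.posDef_iff_isUnit.mpr (hA.isUnit_sqrt hu)

end

theorem mul_eq_zero_of_trace_conjTranspose_mul_mul_eq_zero {A : Matrix n n 𝕜} (hA : A.PosSemidef)
    {Z : Matrix n m 𝕜}
    (h : (Zᴴ * A * Z).trace = 0) : A * Z = 0 := by
  have hS : hA.sqrtᴴ = hA.sqrt := hA.posSemidef_sqrt.1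
  have hSZ : hA.sqrt * Z = 0 := by
    rwa [← trace_conjTranspose_mul_self_eq_zero_iff, conjTranspose_mul, hS, ← Matrix.mul_assoc,
      Matrix.mul_assoc Zᴴ, hA.sqrt_mul_self]
  rw [← hA.sqrt_mul_self, Matrix.mul_assoc, hSZ, Matrix.mul_zero]

end PosSemidef

/-- Multiplying by `Zᴴ` and taking traces, `tr (Zᴴ P Z) + tr (Z Q Zᴴ) = 0` is a sum of two
nonnegative terms. -/
theorem PosDef.eq_zero_of_mul_add_mul_eq_zero {P : Matrix n n 𝕜} {Q : Matrix m m 𝕜}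
    (hP : P.PosDef) (hQ : Q.PosSemidef) {Z : Matrix n m 𝕜} (h : P * Z + Z * Q = 0) : Z = 0 := by
  have htrace : (Zᴴ * P * Z).trace + (Z * Q * Zᴴ).trace = 0 := calc
    _ = (Zᴴ * (P * Z + Z * Q)).trace := by
      rw [Matrix.mul_add, trace_add, trace_mul_comm Zᴴ (Z * Q), Matrix.mul_assoc Zᴴ P]
    _ = 0 := by rw [h, Matrix.mul_zero, trace_zero]
  have hPZ : (Zᴴ * P * Z).trace = 0 :=
    ((add_eq_zero_iff_of_nonneg (hP.posSemidef.conjTranspose_mul_mul_same Z).trace_nonneg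
      (hQ.mul_mul_conjTranspose_same Z).trace_nonneg).mp htrace).1
  rw [← nonsing_inv_mul_cancel_left P Z ((isUnit_iff_isUnit_det P).mp hP.isUnit),
    hP.posSemidef.mul_eq_zero_of_trace_conjTranspose_mul_mul_eq_zero hPZ, Matrix.mul_zero]

theorem PosDef.mul_eq_mul_of_mul_self_mul_eq_mul_mul_self {P : Matrix n n 𝕜} {Q : Matrix m m 𝕜}
    (hP : P.PosDef) (hQ : Q.PosSemidef) {X : Matrix n m 𝕜} (h : P * P * X = X * (Q * Q)) :
    P * X = X * Q := by
  refine sub_eq_zero.mp (hP.eq_zero_of_mul_add_mul_eq_zero hQ ?_)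
  simp only [Matrix.mul_sub, Matrix.sub_mul, Matrix.mul_assoc] at h ⊢
  rw [h]
  abel

theorem inv_mul_eq_mul_inv_of_mul_eq_mul {α : Type*} [CommRing α] [DecidableEq m]
    {P : Matrix n n α} {Q : Matrix m m α} {X : Matrix n m α} (hP : IsUnit P) (hQ : IsUnit Q)
    (h : P * X = X * Q) : P⁻¹ * X = X * Q⁻¹ := calc
  P⁻¹ * X = P⁻¹ * (X * Q * Q⁻¹) := by
    rw [mul_nonsing_inv_cancel_right Q X ((isUnit_iff_isUnit_det Q).mp hQ)]
  _ = X * Q⁻¹ := by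
    rw [← h, Matrix.mul_assoc, nonsing_inv_mul_cancel_left P _ ((isUnit_iff_isUnit_det P).mp hP)]

theorem IsHermitian.mul_inv_mem_unitaryGroup {A P : Matrix n n 𝕜} (hP : P.IsHermitian)
    (hPu : IsUnit P) (h : P * P = Aᴴ * A) : A * P⁻¹ ∈ unitaryGroup n 𝕜 := by
  have hPd : IsUnit P.det := (isUnit_iff_isUnit_det P).mp hPu
  rw [mem_unitaryGroup_iff', star_eq_conjTranspose, conjTranspose_mul, hP.inv.eq,
    Matrix.mul_assoc, ← Matrix.mul_assoc Aᴴ, ← h, mul_nonsing_inv_cancel_right P P hPd,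
    nonsing_inv_mul P hPd]

end Matrix

/-- If invertible `A`, `B` solve `A Xᵢ = Yᵢ B` and `Xᵢ Bᴴ = Aᴴ Yᵢ`, then the polar unitary
factors `U = A (AᴴA)^{-1/2}`, `V = B (BᴴB)^{-1/2}` are unitary and satisfy `U Xᵢ Vᴴ = Yᵢ`. -/
theorem polar_factors_give_unitary_solution
    (d₁ d₂ m : ℕ)
    (A : Matrix (Fin d₁) (Fin d₁) ℂ) (B : Matrix (Fin d₂) (Fin d₂) ℂ)
    (hA : IsUnit A) (hB : IsUnit B)
    (X Y : Fin (m + 1) → Matrix (Fin d₁) (Fin d₂) ℂ)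
    (h1 : ∀ i, A * X i = Y i * B)
    (h2 : ∀ i, X i * Bᴴ = Aᴴ * Y i)
    (U : Matrix (Fin d₁) (Fin d₁) ℂ) (V : Matrix (Fin d₂) (Fin d₂) ℂ)
    (hU : U = A * ((Matrix.posSemidef_conjTranspose_mul_self A).sqrt)⁻¹)
    (hV : V = B * ((Matrix.posSemidef_conjTranspose_mul_self B).sqrt)⁻¹) :
    Uᴴ * U = 1 ∧ Vᴴ * V = 1 ∧ ∀ i, U * X i * Vᴴ = Y i := by
  set hAA := posSemidef_conjTranspose_mul_self A
  set hBB := posSemidef_conjTranspose_mul_self B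
  have hP : hAA.sqrt.PosDef := hAA.posDef_sqrt (hA.star.mul hA)
  have hQ : hBB.sqrt.PosDef := hBB.posDef_sqrt (hB.star.mul hB)
  have hUu : U ∈ unitaryGroup _ ℂ :=
    hU ▸ hP.isHermitian.mul_inv_mem_unitaryGroup hP.isUnit hAA.sqrt_mul_self
  have hVu : V ∈ unitaryGroup _ ℂ :=
    hV ▸ hQ.isHermitian.mul_inv_mem_unitaryGroup hQ.isUnit hBB.sqrt_mul_self
  refine ⟨mem_unitaryGroup_iff'.mp hUu, mem_unitaryGroup_iff'.mp hVu, fun i => ?_⟩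
  have hPX : hAA.sqrt * X i = X i * hBB.sqrt := by
    refine hP.mul_eq_mul_of_mul_self_mul_eq_mul_mul_self hQ.posSemidef ?_
    rw [hAA.sqrt_mul_self, hBB.sqrt_mul_self, Matrix.mul_assoc, h1, ← Matrix.mul_assoc, ← h2,
      Matrix.mul_assoc]
  have hUX : U * X i = Y i * V := by
    rw [hU, hV, Matrix.mul_assoc, inv_mul_eq_mul_inv_of_mul_eq_mul hP.isUnit hQ.isUnit hPX,
      ← Matrix.mul_assoc, h1, Matrix.mul_assoc]
  rw [hUX, Matrix.mul_assoc, ← star_eq_conjTranspose, mem_unitaryGroup_iff.mp hVu, Matrix.mul_one]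
end

section
/- Let G be a unital ℂ-subalgebra of the n×n complex matrices and let A be an invertible n×n complex matrix with A ∈ G and A† ∈ G. Then the unitary factor U = A · ((A†A)^{1/2})⁻¹ of the polar decomposition of A is a unitary matrix belonging to G. -/
/-! With `H = Aᴴ * A`, the factor `((Aᴴ * A) ^ (1/2))⁻¹` is the functional calculus of
`x ↦ x ^ (-1/2)` at `H`. A Hermitian matrix has finite spectrum, so by Lagrange interpolation on
the spectrum this is a polynomial in `H ∈ G`; hence `U ∈ G`. Unitarity is the identity
`x ^ (-1/2) * x * x ^ (-1/2) = 1` on the (positive) spectrum of `H`. -/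

open Matrix
open scoped ComplexOrder

theorem cfc_mem_adjoin_singleton_of_finite_spectrum {R A : Type*} {p : A → Prop} [Field R]
    [StarRing R] [MetricSpace R] [IsTopologicalRing R] [ContinuousStar R] [Ring A] [StarRing A]
    [TopologicalSpace A] [Algebra R A] [ContinuousFunctionalCalculus R A p]
    (f : R → R) {a : A} (hfin : (spectrum R a).Finite) (ha : p a) :
    cfc f a ∈ Algebra.adjoin R {a} := by
  classical
  have hinterp : cfc f a = cfc (Lagrange.interpolate hfin.toFinset id f).eval a :=
    cfc_congr fun x hx =>
      (Lagrange.eval_interpolate_at_node f (Set.injOn_id _) (hfin.mem_toFinset.2 hx)).symm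
  rw [hinterp, cfc_polynomial _ a ha]
  exact Polynomial.aeval_mem_adjoin_singleton R a

theorem cfc_inv_sqrt_mul_self_mul_cfc_inv_sqrt {A : Type*} [Ring A] [StarRing A]
    [TopologicalSpace A] [Algebra ℝ A] [ContinuousFunctionalCalculus ℝ A IsSelfAdjoint]
    {a : A} (ha : IsSelfAdjoint a) (hpos : ∀ x ∈ spectrum ℝ a, 0 < x) :
    cfc (fun x => (√x)⁻¹) a * a * cfc (fun x => (√x)⁻¹) a = 1 := by
  have hcont : ContinuousOn (fun x : ℝ => (√x)⁻¹) (spectrum ℝ a) :=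
    Real.continuous_sqrt.continuousOn.inv₀ fun x hx => (Real.sqrt_pos.2 (hpos x hx)).ne'
  calc cfc (fun x => (√x)⁻¹) a * a * cfc (fun x => (√x)⁻¹) a
      = cfc (fun x => (√x)⁻¹) a * cfc id a * cfc (fun x => (√x)⁻¹) a := by rw [cfc_id ℝ a]
    _ = cfc (fun x => (√x)⁻¹ * x * (√x)⁻¹) a := by rw [← cfc_mul _ _ a, ← cfc_mul _ _ a]; rfl
    _ = cfc (1 : ℝ → ℝ) a := cfc_congr fun x hx => by
        have hsqrt : √x * √x = x := Real.mul_self_sqrt (hpos x hx).le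
        rw [Pi.one_apply, mul_right_comm, ← mul_inv, hsqrt, inv_mul_cancel₀ (hpos x hx).ne']
    _ = 1 := cfc_one ℝ a

namespace Matrix.PosSemidef

variable {n 𝕜 : Type*} [Fintype n] [DecidableEq n] [RCLike 𝕜] {H : Matrix n n 𝕜}

theorem sqrt_eq_cfc (hH : H.PosSemidef) : hH.sqrt = cfc Real.sqrt H := by
  rw [hH.1.cfc_eq, IsHermitian.cfc, Unitary.conjStarAlgAut_apply]
  rfl

theorem spectrum_pos_of_isUnit (hH : H.PosSemidef) (hunit : IsUnit H) :
    ∀ x ∈ spectrum ℝ H, 0 < x := by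
  intro x hx
  obtain ⟨i, rfl⟩ := hH.1.spectrum_real_eq_range_eigenvalues ▸ hx
  exact (hH.eigenvalues_nonneg i).lt_of_ne fun h => spectrum.zero_notMem ℝ hunit (h ▸ hx)

theorem sqrt_inv_eq_cfc (hH : H.PosSemidef) (hunit : IsUnit H) :
    hH.sqrt⁻¹ = cfc (fun x => (√x)⁻¹) H := by
  rw [hH.sqrt_eq_cfc, nonsing_inv_eq_ringInverse]
  exact (cfc_inv Real.sqrt H
    (fun x hx => (Real.sqrt_pos.2 (hH.spectrum_pos_of_isUnit hunit x hx)).ne')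
    (ha := hH.isHermitian)).symm

end Matrix.PosSemidef

/-- The unitary polar factor of an invertible `A` with `A, Aᴴ ∈ G` lies in the
unital subalgebra `G`. -/
theorem polar_unitary_factor_mem_subalgebra
    (n : ℕ)
    (G : Subalgebra ℂ (Matrix (Fin n) (Fin n) ℂ))
    (A : Matrix (Fin n) (Fin n) ℂ)
    (hA : IsUnit A) (hAG : A ∈ G) (hAHG : Aᴴ ∈ G)
    (U : Matrix (Fin n) (Fin n) ℂ)
    (hU : U = A * ((Matrix.posSemidef_conjTranspose_mul_self A).sqrt)⁻¹) :
    Uᴴ * U = 1 ∧ U ∈ G := by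
  set hH := Matrix.posSemidef_conjTranspose_mul_self A
  have hunit : IsUnit (Aᴴ * A) := (isUnit_conjTranspose A |>.2 hA).mul hA
  rw [hH.sqrt_inv_eq_cfc hunit] at hU
  subst hU
  constructor
  · have hself : (cfc (fun x => (√x)⁻¹) (Aᴴ * A))ᴴ = cfc (fun x => (√x)⁻¹) (Aᴴ * A) :=
      (cfc_predicate (p := IsSelfAdjoint) _ _ : IsSelfAdjoint _)
    rw [conjTranspose_mul, hself, mul_assoc, ← mul_assoc Aᴴ, ← mul_assoc]
    exact cfc_inv_sqrt_mul_self_mul_cfc_inv_sqrt hH.isHermitian (hH.spectrum_pos_of_isUnit hunit)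
  · refine G.mul_mem hAG (Algebra.adjoin_le (S := G.restrictScalars ℝ) ?_
      (cfc_mem_adjoin_singleton_of_finite_spectrum _ finite_real_spectrum hH.isHermitian))
    exact Set.singleton_subset_iff.2 (G.mul_mem hAHG hAG)
end
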